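/- Let X and Y be nonnegative random variables with positively decreasing distributions F and G, which are strongly asymptotically independent: P[X > x, Y > y] ~ C·F̄(x)·Ḡ(y) as x,y → ∞ for some constant C > 0. Then the distribution of min(X,Y), whose tail is P[X > x, Y > x], is positively decreasing. -/

import Mathlib

open Filter MeasureTheory

/-- Tail of (the distribution of) a random variable `X`. -/
noncomputable def rtail {Ω : Type*} [MeasurableSpace Ω] (μ : Measure Ω) (X : Ω → ℝ) (x : ℝ) : ℝ :=
  (μ {ω | x < X ω}).toReal

/-- The positively decreasing class `𝒫𝒟`. -/
def PosDec (T : ℝ → ℝ) : Prop :=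
  ∀ v : ℝ, 1 < v → limsup (fun x => T (v * x) / T x) atTop < 1

/-- The generalized long-tailed class `𝒪ℒ`. -/
def GenLong (T : ℝ → ℝ) : Prop :=
  ∀ t : ℝ, t ≠ 0 → IsBoundedUnder (· ≤ ·) atTop (fun x => T (x - t) / T x)

/-- The long-tailed class `ℒ`. -/
def LongTailed (T : ℝ → ℝ) : Prop :=
  ∀ t : ℝ, Tendsto (fun x => T (x - t) / T x) atTop (nhds 1)

/-- The dominatedly varying class `𝒟`. -/
def DomVar (T : ℝ → ℝ) : Prop :=
  ∀ b : ℝ, 0 < b → b < 1 → IsBoundedUnder (· ≤ ·) atTop (fun x => T (b * x) / T x)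

/-- Strong asymptotic independence with constant `C`:
`P[X > x, Y > y] ~ C ⋅ F̄(x) ⋅ Ḡ(y)` as `(x, y) → (∞, ∞)`. -/
def SAI {Ω : Type*} [MeasurableSpace Ω] (μ : Measure Ω) (X Y : Ω → ℝ) (C : ℝ) : Prop :=
  Tendsto
    (fun p : ℝ × ℝ =>
      (μ {ω | p.1 < X ω ∧ p.2 < Y ω}).toReal / (rtail μ X p.1 * rtail μ Y p.2))
    (atTop ×ˢ atTop) (nhds C)

open Topology

/-!
On the diagonal, strong asymptotic independence says that the tail `M` of `min X Y` is
`r ⋅ F̄ ⋅ Ḡ` with `r x → C ≠ 0`. Hence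
`M(vx)/M(x) = (r(vx)/r(x)) ⋅ (F̄(vx)/F̄(x)) ⋅ (Ḡ(vx)/Ḡ(x))`, where the first factor tends to `1`,
the second is eventually below some `a < 1` because `F ∈ 𝒫𝒟`, and the third is at most `1`
because `Ḡ` is nonincreasing.
-/

section Ratio

variable {T : ℝ → ℝ}

lemma Antitone.div_le_one_of_one_le (hT : Antitone T) (hT0 : ∀ x, 0 ≤ T x) {v x : ℝ}
    (hv : 1 ≤ v) (hx : 0 ≤ x) : T (v * x) / T x ≤ 1 :=
  div_le_one_of_le₀ (hT (le_mul_of_one_le_left hx hv)) (hT0 x)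

lemma PosDec.exists_eventually_div_lt (hPD : PosDec T) (hT : Antitone T) (hT0 : ∀ x, 0 ≤ T x)
    {v : ℝ} (hv : 1 < v) : ∃ a < 1, ∀ᶠ x in atTop, T (v * x) / T x < a := by
  -- without this bound the real `limsup` in `PosDec` would be a junk value
  have hbdd : IsBoundedUnder (· ≤ ·) atTop (fun x => T (v * x) / T x) :=
    ⟨1, eventually_map.2 <| (eventually_ge_atTop 0).mono fun x hx =>
      hT.div_le_one_of_one_le hT0 hv.le hx⟩
  obtain ⟨a, hLa, ha1⟩ := exists_between (hPD v hv)
  exact ⟨a, ha1, eventually_lt_of_limsup_lt hLa hbdd⟩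

lemma posDec_of_eventually_div_le (hT0 : ∀ x, 0 ≤ T x)
    (h : ∀ v : ℝ, 1 < v → ∃ a < 1, ∀ᶠ x in atTop, T (v * x) / T x ≤ a) : PosDec T := by
  intro v hv
  obtain ⟨a, ha1, ha⟩ := h v hv
  have hcob : IsCoboundedUnder (· ≤ ·) atTop (fun x => T (v * x) / T x) :=
    isCoboundedUnder_le_of_eventually_le atTop (x := 0)
      (Eventually.of_forall fun x => div_nonneg (hT0 _) (hT0 x))
  exact (limsup_le_of_le hcob ha).trans_lt ha1

end Ratio

theorem PosDec.of_tendsto_div_mul {T F G : ℝ → ℝ} {C : ℝ} (hC : C ≠ 0) (hT0 : ∀ x, 0 ≤ T x)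
    (hF : Antitone F) (hF0 : ∀ x, 0 ≤ F x) (hG : Antitone G) (hG0 : ∀ x, 0 ≤ G x)
    (hTFG : Tendsto (fun x => T x / (F x * G x)) atTop (𝓝 C)) (hPD : PosDec F) : PosDec T := by
  set r := fun x => T x / (F x * G x)
  refine posDec_of_eventually_div_le hT0 fun v hv => ?_
  obtain ⟨a, ha1, hFa⟩ := hPD.exists_eventually_div_lt hF hF0 hv
  have hvx : Tendsto (fun x => v * x) atTop atTop := tendsto_id.const_mul_atTop (by linarith)
  have hr0 : ∀ᶠ x in atTop, r x ≠ 0 := hTFG.eventually_ne hC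
  have hr_ratio : Tendsto (fun x => r (v * x) / r x) atTop (𝓝 1) := by
    simpa only [div_self hC, Pi.div_def, Function.comp_def] using (hTFG.comp hvx).div hTFG hC
  have hfactor : ∀ᶠ x in atTop,
      T (v * x) / T x = r (v * x) / r x * (F (v * x) / F x) * (G (v * x) / G x) := by
    filter_upwards [hr0, hvx.eventually hr0] with x hx hvx
    simp only [r, ne_eq, div_eq_zero_iff, mul_eq_zero, not_or] at hx hvx ⊢
    obtain ⟨hTx, hFx, hGx⟩ := hx
    obtain ⟨hTvx, hFvx, hGvx⟩ := hvx
    field_simp [hTx, hFx, hGx, hTvx, hFvx, hGvx]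
  have hlim : Tendsto (fun x => r (v * x) / r x * a) atTop (𝓝 a) := by
    simpa only [one_mul] using hr_ratio.mul_const a
  obtain ⟨b, hab, hb1⟩ := exists_between ha1
  refine ⟨b, hb1, ?_⟩
  filter_upwards [hfactor, hFa, hlim.eventually (eventually_lt_nhds hab),
    eventually_ge_atTop 0] with x hx hxF hxb hx0
  have hr_nonneg : 0 ≤ r (v * x) / r x := by
    have := hT0 x; have := hF0 x; have := hG0 x
    have := hT0 (v * x); have := hF0 (v * x); have := hG0 (v * x)
    positivity
  have hGx := hG.div_le_one_of_one_le hG0 hv.le hx0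
  calc T (v * x) / T x
      = r (v * x) / r x * (F (v * x) / F x) * (G (v * x) / G x) := hx
    _ ≤ r (v * x) / r x * (F (v * x) / F x) * 1 := by
        gcongr
        exact mul_nonneg hr_nonneg (div_nonneg (hF0 _) (hF0 x))
    _ ≤ r (v * x) / r x * a := by rw [mul_one]; gcongr
    _ ≤ b := hxb.le

section Tails

variable {Ω : Type*} [MeasurableSpace Ω] (μ : Measure Ω)

lemma rtail_nonneg (X : Ω → ℝ) (x : ℝ) : 0 ≤ rtail μ X x := ENNReal.toReal_nonneg

lemma rtail_antitone [IsFiniteMeasure μ] (X : Ω → ℝ) : Antitone (rtail μ X) :=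
  fun _ _ hxy => ENNReal.toReal_mono (measure_ne_top μ _)
    (measure_mono fun _ hω => lt_of_le_of_lt hxy hω)

lemma rtail_min (X Y : Ω → ℝ) (x : ℝ) :
    rtail μ (fun ω => min (X ω) (Y ω)) x = (μ {ω | x < X ω ∧ x < Y ω}).toReal := by
  simp only [rtail, lt_min_iff]

end Tails

theorem stmt3_general {Ω : Type*} [MeasurableSpace Ω] (μ : Measure Ω) [IsProbabilityMeasure μ]
    (X Y : Ω → ℝ)
    (C : ℝ) (hC : 0 < C) (hSAI : SAI μ X Y C)
    (hF : PosDec (rtail μ X)) :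
    PosDec (rtail μ (fun ω => min (X ω) (Y ω))) := by
  have hdiag : Tendsto (fun x => rtail μ (fun ω => min (X ω) (Y ω)) x /
      (rtail μ X x * rtail μ Y x)) atTop (𝓝 C) := by
    simpa only [rtail_min, Function.comp_def, id] using hSAI.comp (tendsto_id.prodMk tendsto_id)
  exact hF.of_tendsto_div_mul hC.ne' (rtail_nonneg μ _) (rtail_antitone μ X)
    (rtail_nonneg μ X) (rtail_antitone μ Y) (rtail_nonneg μ Y) hdiag

theorem stmt3 {Ω : Type*} [MeasurableSpace Ω] (μ : Measure Ω) [IsProbabilityMeasure μ]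
    (X Y : Ω → ℝ) (hX : ∀ ω, 0 ≤ X ω) (hY : ∀ ω, 0 ≤ Y ω)
    (C : ℝ) (hC : 0 < C) (hSAI : SAI μ X Y C)
    (hF : PosDec (rtail μ X)) (hG : PosDec (rtail μ Y)) :
    PosDec (rtail μ (fun ω => min (X ω) (Y ω))) :=
  stmt3_general μ X Y C hC hSAI hF
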